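/- If T is a Fishburn tree with maximum label k, then its Fishburn cover P(T) = B_1...B_k is a Fishburn cover: each B_i is nonempty, the union of the B_i equals [k], and every element j of B_i satisfies j ≤ i. -/

import Mathlib

inductive LTree where
  | nil : LTree
  | node : LTree → ℕ → LTree → LTree
deriving DecidableEq

namespace LTree

def size : LTree → ℕ
  | nil => 0
  | node L _ R => L.size + 1 + R.size

/-- The in-order sequence of labels. -/
def inorder : LTree → List ℕ
  | nil => []
  | node L r R => L.inorder ++ r :: R.inorder

/-- The maximum label (0 for the empty tree). -/
def maxL : LTree → ℕ
  | nil => 0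
  | node L r R => max r (max L.maxL R.maxL)

/-- Weakly decreasing along every root-to-leaf path. -/
def Decreasing : LTree → Prop
  | nil => True
  | node L r R => L.maxL ≤ r ∧ R.maxL ≤ r ∧ L.Decreasing ∧ R.Decreasing

/-- Strictly decreasing to the left: every label in a left subtree
is strictly smaller than the label of its parent. -/
def StrictLeft : LTree → Prop
  | nil => True
  | node L r R => L.maxL < r ∧ L.StrictLeft ∧ R.StrictLeft

/-- An endotree: decreasing, strictly decreasing to the left, labels in `[n]`. -/
def IsEndotree (T : LTree) : Prop :=
  T.Decreasing ∧ T.StrictLeft ∧ ∀ l ∈ T.inorder, 1 ≤ l ∧ l ≤ T.size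

/-- A regular endotree: the set of labels equals `[k]` for some `k ≤ n`. -/
def IsRegularEndotree (T : LTree) : Prop :=
  T.IsEndotree ∧ ∃ k ≤ T.size, ∀ l, l ∈ T.inorder ↔ (1 ≤ l ∧ l ≤ k)

end LTree

/-- An endofunction on `[n]`, identified with a word of length `n` over `[n]`. -/
def IsEndofun (x : List ℕ) : Prop := ∀ a ∈ x, 1 ≤ a ∧ a ≤ x.length

/-- A Cayley permutation: an endofunction whose image is `[k]` for some `k ≤ n`. -/
def IsCayley (x : List ℕ) : Prop :=
  IsEndofun x ∧ ∃ k ≤ x.length, ∀ j, j ∈ x ↔ (1 ≤ j ∧ j ≤ k)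

namespace LTree

/-- The list of (subtrees rooted at the) nodes of `T`, in in-order. -/
def nodes : LTree → List LTree
  | nil => []
  | node L r R => L.nodes ++ node L r R :: R.nodes

/-- Root label (0 for the empty tree). -/
def rootLabel : LTree → ℕ
  | nil => 0
  | node _ r _ => r

/-- Left subtree. -/
def leftT : LTree → LTree
  | nil => nil
  | node L _ _ => L

/-- Indices `i` (0-based) such that the `i`-th in-order node `v_{i+1}` is in
`treetops(T)`: either the first node or a node with nonempty left subtree. -/
def treetopsIdx (T : LTree) : Set ℕ :=
  {i | i < T.size ∧ (i = 0 ∨ (T.nodes.getD i nil).leftT ≠ nil)}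

/-- Indices `i` such that the label of the `i`-th in-order node does not occur
at any earlier in-order node. -/
def unseenIdx (T : LTree) : Set ℕ :=
  {i | i < T.size ∧
    ∀ j < i, (T.nodes.getD j nil).rootLabel ≠ (T.nodes.getD i nil).rootLabel}

/-- A Fishburn tree: a regular endotree with `treetops(T) = unseen(T)`. -/
def IsFishburnTree (T : LTree) : Prop :=
  T.IsRegularEndotree ∧ treetopsIdx T = unseenIdx T

end LTree

namespace LTree

/-- The subtree at a position (path from the root: `false` = left, `true` = right). -/
def subtreeAt : LTree → List Bool → Option LTree
  | t, [] => some t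
  | nil, _ :: _ => none
  | node L _ _, false :: q => L.subtreeAt q
  | node _ _ R, true :: q => R.subtreeAt q

/-- `p` is the position of a node of `T`. -/
def IsNodePos (T : LTree) (p : List Bool) : Prop :=
  ∃ L r R, T.subtreeAt p = some (node L r R)

/-- The label of the node at position `p` (0 if there is no node there). -/
def labelAt (T : LTree) (p : List Bool) : ℕ :=
  match T.subtreeAt p with
  | some t => t.rootLabel
  | none => 0

/-- `p` lies on the diagonal of `T`, i.e. on the maximal left path from the root. -/
def OnDiag (p : List Bool) : Prop := ∀ b ∈ p, b = false

/-- The node at position `p` is a treetop: the first in-order node (the deepest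
node of the diagonal) or a node with a left child. -/
def PosTreetop (T : LTree) (p : List Bool) : Prop :=
  IsNodePos T p ∧ (IsNodePos T (p ++ [false]) ∨ OnDiag p)

/-- Auxiliary computation of the index of the maximal right path through a node:
the state records whether the current node is on the diagonal and the current
path index. -/
def blabelAux : LTree → Bool → ℕ → List Bool → ℕ
  | _, _, cur, [] => cur
  | nil, _, _, _ :: _ => 0
  | node _ _ R, _, cur, true :: q => blabelAux R false cur q
  | node L r _, d, _, false :: q =>
      blabelAux L d (if d then L.rootLabel else r) q

/-- The index `b(u)` of the maximal right path containing the node at `p`: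
`b(root) = ℓ(root)`; `b(right child of u) = b(u)`; `b(left child of u)` is
`ℓ(left child)` if `u` is diagonal and `ℓ(u)` otherwise. -/
def blabel (T : LTree) (p : List Bool) : ℕ :=
  blabelAux T true T.rootLabel p

/-- The list of positions of the nodes of `T`. -/
def positions : LTree → List (List Bool)
  | nil => []
  | node L _ R =>
      [] :: (L.positions.map (List.cons false) ++ R.positions.map (List.cons true))

end LTree

/-- The Fishburn cover of a tree: `B_i` is the multiset of labels of the nodes
lying on the `i`-th maximal right path `W_i` (1-indexed: `B_{i+1}` is entry `i`). -/
def LTree.cover (T : LTree) : List (Multiset ℕ) :=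
  (List.range T.maxL).map fun i =>
    (((T.positions.filter fun p => T.blabel p = i + 1).map T.labelAt : List ℕ) : Multiset ℕ)

/-- A Fishburn cover: an ordered list of `k` nonempty multisets whose union of
supports is `[k]`, with `j ≤ i` for every `j ∈ B_i`. -/
def IsFishburnCover (P : List (Multiset ℕ)) : Prop :=
  (∀ B ∈ P, B ≠ 0) ∧
  (∀ j : ℕ, (1 ≤ j ∧ j ≤ P.length) ↔ ∃ B ∈ P, j ∈ B) ∧
  (∀ i : ℕ, ∀ h : i < P.length, ∀ j ∈ P.get ⟨i, h⟩, j ≤ i + 1)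

namespace LTree

lemma subtreeAt_append (p q : List Bool) : ∀ T : LTree,
    subtreeAt T (p ++ q) = (subtreeAt T p).bind (fun t => subtreeAt t q) := by
  induction p with
  | nil => intro T; simp [subtreeAt]
  | cons b p ih =>
    intro T
    cases T with
    | nil => simp [subtreeAt]
    | node L r R => cases b <;> simp [subtreeAt, ih]

lemma mem_positions_iff : ∀ (T : LTree) (p : List Bool),
    p ∈ T.positions ↔ IsNodePos T p := by
  intro T
  induction T with
  | nil =>
    intro p
    cases p <;> simp [positions, IsNodePos, subtreeAt]
  | node L r R ihL ihR =>
    intro p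
    cases p with
    | nil => simp [positions, IsNodePos, subtreeAt]
    | cons b q =>
      cases b
      · simpa [positions, IsNodePos, subtreeAt] using ihL q
      · simpa [positions, IsNodePos, subtreeAt] using ihR q

lemma mem_nodes_isNode : ∀ (T : LTree) (t : LTree), t ∈ T.nodes →
    ∃ L r R, t = node L r R := by
  intro T
  induction T with
  | nil => intro t ht; simp [nodes] at ht
  | node L r R ihL ihR =>
    intro t ht
    simp [nodes] at ht
    rcases ht with h | h | h
    · exact ihL t h
    · exact ⟨L, r, R, h⟩
    · exact ihR t h

lemma exists_pos_of_mem_nodes : ∀ (T : LTree) (t : LTree), t ∈ T.nodes →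
    ∃ p, subtreeAt T p = some t := by
  intro T
  induction T with
  | nil => intro t ht; simp [nodes] at ht
  | node L r R ihL ihR =>
    intro t ht
    simp [nodes] at ht
    rcases ht with h | h | h
    · obtain ⟨p, hp⟩ := ihL t h
      exact ⟨false :: p, hp⟩
    · exact ⟨[], by simp [subtreeAt, h]⟩
    · obtain ⟨p, hp⟩ := ihR t h
      exact ⟨true :: p, hp⟩

lemma nodes_map_rootLabel : ∀ T : LTree, T.nodes.map rootLabel = T.inorder := by
  intro T
  induction T with
  | nil => simp [nodes, inorder]
  | node L r R ihL ihR => simp [nodes, inorder, ihL, ihR, rootLabel]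

lemma nodes_length : ∀ T : LTree, T.nodes.length = T.size := by
  intro T
  induction T with
  | nil => simp [nodes, size]
  | node L r R ihL ihR => simp [nodes, size, ihL, ihR]; omega

lemma mem_inorder_of_subtreeAt : ∀ (p : List Bool) (T t : LTree),
    subtreeAt T p = some t → ∀ l ∈ t.inorder, l ∈ T.inorder := by
  intro p
  induction p with
  | nil => intro T t h; simp [subtreeAt] at h; subst h; exact fun l hl => hl
  | cons b q ih =>
    intro T t h
    cases T with
    | nil => simp [subtreeAt] at h
    | node L r R =>
      cases b with
      | false =>
        intro l hl
        have := ih L t h l hl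
        simp [inorder]; tauto
      | true =>
        intro l hl
        have := ih R t h l hl
        simp [inorder]; tauto

lemma maxL_eq_rootLabel : ∀ T : LTree, T.Decreasing → T.maxL = T.rootLabel := by
  intro T hT
  cases T with
  | nil => rfl
  | node L r R =>
    obtain ⟨h1, h2, _, _⟩ := hT
    simp [maxL, rootLabel]; omega

lemma rootLabel_le_maxL : ∀ T : LTree, T.rootLabel ≤ T.maxL := by
  intro T; cases T with
  | nil => simp [rootLabel, maxL]
  | node L r R => simp [rootLabel, maxL]

lemma le_maxL_of_mem_inorder : ∀ (T : LTree) (l : ℕ), l ∈ T.inorder → l ≤ T.maxL := by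
  intro T
  induction T with
  | nil => simp [inorder]
  | node L r R ihL ihR =>
    intro l hl
    simp [inorder] at hl
    rcases hl with h | h | h
    · have := ihL l h; simp [maxL]; omega
    · simp [maxL]; omega
    · have := ihR l h; simp [maxL]; omega

lemma blabelAux_le : ∀ (p : List Bool) (T : LTree) (d : Bool) (cur : ℕ),
    T.Decreasing → T.maxL ≤ cur → blabelAux T d cur p ≤ cur := by
  intro p
  induction p with
  | nil => intro T d cur _ _; simp [blabelAux]
  | cons b q ih =>
    intro T d cur hdec hle
    cases T with
    | nil => simp [blabelAux]
    | node L r R =>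
      obtain ⟨h1, h2, hL, hR⟩ := hdec
      have hmx : max r (max L.maxL R.maxL) ≤ cur := hle
      cases b with
      | true =>
        exact ih R false cur hR (by omega)
      | false =>
        show blabelAux L d (if d then L.rootLabel else r) q ≤ cur
        cases d with
        | true =>
          have h3 : L.maxL = L.rootLabel := maxL_eq_rootLabel L hL
          have := ih L true L.rootLabel hL (le_of_eq h3)
          simp at this ⊢
          omega
        | false =>
          have := ih L false r hL h1
          simp at this ⊢
          omega

lemma maxL_le_blabelAux : ∀ (p : List Bool) (T : LTree) (d : Bool) (cur : ℕ) (t : LTree),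
    T.Decreasing → T.maxL ≤ cur → subtreeAt T p = some t →
    t.maxL ≤ blabelAux T d cur p := by
  intro p
  induction p with
  | nil =>
    intro T d cur t _ hle h
    simp [subtreeAt] at h; subst h; simpa [blabelAux] using hle
  | cons b q ih =>
    intro T d cur t hdec hle h
    cases T with
    | nil => simp [subtreeAt] at h
    | node L r R =>
      obtain ⟨h1, h2, hL, hR⟩ := hdec
      have hmx : max r (max L.maxL R.maxL) ≤ cur := hle
      cases b with
      | true => exact ih R false cur t hR (by omega) h
      | false =>
        show t.maxL ≤ blabelAux L d (if d then L.rootLabel else r) q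
        cases d with
        | true =>
          have h3 : L.maxL = L.rootLabel := maxL_eq_rootLabel L hL
          simpa using ih L true L.rootLabel t hL (le_of_eq h3) h
        | false =>
          simpa using ih L false r t hL h1 h

lemma blabelAux_diag : ∀ (p : List Bool) (T t : LTree),
    OnDiag p → subtreeAt T p = some t →
    blabelAux T true T.rootLabel p = t.rootLabel := by
  intro p
  induction p with
  | nil =>
    intro T t _ h
    simp [subtreeAt] at h; subst h
    cases T <;> rfl
  | cons b q ih =>
    intro T t hd h
    have hb : b = false := hd b (by simp)
    subst hb
    cases T with
    | nil => simp [subtreeAt] at h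
    | node L r R =>
      have : blabelAux (node L r R) true (node L r R).rootLabel (false :: q)
          = blabelAux L true L.rootLabel q := by simp [blabelAux]
      rw [this]
      exact ih L t (fun b hb => hd b (by simp [hb])) h

lemma blabelAux_snoc_false : ∀ (p : List Bool) (T : LTree) (d : Bool) (cur : ℕ)
    (L : LTree) (r : ℕ) (R : LTree),
    subtreeAt T p = some (node L r R) → ¬(d = true ∧ OnDiag p) →
    blabelAux T d cur (p ++ [false]) = r := by
  intro p
  induction p with
  | nil =>
    intro T d cur L r R h hnd
    simp [subtreeAt] at h; subst h
    have hd : d = false := by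
      cases d
      · rfl
      · exact absurd ⟨rfl, by intro b hb; simp at hb⟩ hnd
    subst hd
    simp [blabelAux]
  | cons b q ih =>
    intro T d cur L r R h hnd
    cases T with
    | nil => simp [subtreeAt] at h
    | node L' r' R' =>
      cases b with
      | true =>
        show blabelAux R' false cur (q ++ [false]) = r
        exact ih R' false cur L r R h (by rintro ⟨h', _⟩; simp at h')
      | false =>
        show blabelAux L' d (if d then L'.rootLabel else r') (q ++ [false]) = r
        refine ih L' d _ L r R h ?_
        rintro ⟨hd, hq⟩
        exact hnd ⟨hd, fun b hb => by
          rcases List.mem_cons.mp hb with h' | h'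
          · exact h'
          · exact hq b h'⟩

lemma exists_diag_first : ∀ (T : LTree), T ≠ nil →
    ∃ p, OnDiag p ∧ subtreeAt T p = some (T.nodes.getD 0 nil) := by
  intro T
  induction T with
  | nil => intro h; exact absurd rfl h
  | node L r R ihL ihR =>
    intro _
    cases L with
    | nil =>
      refine ⟨[], fun b hb => by simp at hb, ?_⟩
      simp [subtreeAt, nodes]
    | node L1 r1 R1 =>
      obtain ⟨p, hp1, hp2⟩ := ihL (by simp)
      refine ⟨false :: p, ?_, ?_⟩
      · intro b hb
        rcases List.mem_cons.mp hb with h' | h'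
        · exact h'
        · exact hp1 b h'
      · show (L1.node r1 R1).subtreeAt p = some _
        have hne : (L1.node r1 R1).nodes ≠ [] := by simp [nodes]
        have heq : ((L1.node r1 R1).node r R).nodes.getD 0 nil
            = (L1.node r1 R1).nodes.getD 0 nil := by
          show ((L1.node r1 R1).nodes ++ ((L1.node r1 R1).node r R) :: R.nodes).getD 0 nil = _
          rw [List.getD_append]
          exact List.length_pos_iff.mpr hne
        rw [heq]
        exact hp2

end LTree

lemma LTree.maxL_spec (T : LTree) (hdec : T.Decreasing) (k' : ℕ)
    (hk' : ∀ l, l ∈ T.inorder ↔ (1 ≤ l ∧ l ≤ k')) : T.maxL = k' := by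
  cases T with
  | nil =>
    show (0 : ℕ) = k'
    by_contra hne
    have := (hk' k').mpr ⟨by omega, le_refl _⟩
    simp [inorder] at this
  | node L r R =>
    have hr : r ∈ (node L r R).inorder := by simp [inorder]
    have h1 := (hk' r).mp hr
    have hk1 : 1 ≤ k' := by omega
    have hkin := (hk' k').mpr ⟨hk1, le_refl _⟩
    have h2 := le_maxL_of_mem_inorder _ _ hkin
    have h3 : (node L r R).maxL = r := maxL_eq_rootLabel _ hdec
    omega

theorem fishburn_cover_isCover' (T : LTree) (h : T.IsFishburnTree) :
    IsFishburnCover T.cover := by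
  classical
  obtain ⟨⟨⟨hdec, hsl, hbound⟩, k', hk'le, hk'⟩, htu⟩ := h
  have hmaxk : T.maxL = k' := LTree.maxL_spec T hdec k' hk'
  have hiff : ∀ l, l ∈ T.inorder ↔ 1 ≤ l ∧ l ≤ T.maxL := by
    intro l; rw [hmaxk]; exact hk' l
  have hlen : T.cover.length = T.maxL := by simp [LTree.cover]
  have hnode : ∀ p ∈ T.positions, ∃ L r R, T.subtreeAt p = some (LTree.node L r R) :=
    fun p hp => (LTree.mem_positions_iff T p).mp hp
  have hroot_eq : T.maxL = T.rootLabel := LTree.maxL_eq_rootLabel T hdec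
  have hub : ∀ p, T.blabel p ≤ T.maxL := by
    intro p
    have := LTree.blabelAux_le p T true T.rootLabel hdec (le_of_eq hroot_eq)
    rw [hroot_eq]; exact this
  have hlb : ∀ (p) (L' : LTree) (r' : ℕ) (R' : LTree),
      T.subtreeAt p = some (LTree.node L' r' R') → r' ≤ T.blabel p := by
    intro p L' r' R' hp
    have h1 := LTree.maxL_le_blabelAux p T true T.rootLabel _ hdec (le_of_eq hroot_eq) hp
    have h2 : r' ≤ (LTree.node L' r' R').maxL := LTree.rootLabel_le_maxL (LTree.node L' r' R')
    exact le_trans h2 h1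
  have hexists : ∀ j, 1 ≤ j → j ≤ T.maxL → ∃ p ∈ T.positions, T.blabel p = j := by
    intro j h1 h2
    have hj : j ∈ T.inorder := (hiff j).mpr ⟨h1, h2⟩
    have hQ : ∃ m, m < T.size ∧ (T.nodes.getD m LTree.nil).rootLabel = j := by
      have hmem : j ∈ T.nodes.map LTree.rootLabel := by
        rw [LTree.nodes_map_rootLabel]; exact hj
      obtain ⟨t, ht, hrt⟩ := List.mem_map.mp hmem
      obtain ⟨m, hm, hget⟩ := List.mem_iff_getElem.mp ht
      refine ⟨m, by rw [← LTree.nodes_length]; exact hm, ?_⟩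
      rw [List.getD_eq_getElem _ _ hm, hget, hrt]
    have hspec := Nat.find_spec hQ
    set i0 := Nat.find hQ with hi0def
    have hunseen : i0 ∈ LTree.unseenIdx T := by
      simp only [LTree.unseenIdx, Set.mem_setOf_eq]
      refine ⟨hspec.1, ?_⟩
      intro m hm heq
      exact Nat.find_min hQ hm ⟨by omega, heq.trans hspec.2⟩
    have htop : i0 ∈ LTree.treetopsIdx T := by rw [htu]; exact hunseen
    simp only [LTree.treetopsIdx, Set.mem_setOf_eq] at htop
    have htm : T.nodes.getD i0 LTree.nil ∈ T.nodes := by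
      rw [List.getD_eq_getElem _ _ (by rw [LTree.nodes_length]; exact htop.1)]
      exact List.getElem_mem _
    obtain ⟨L', r', R', hteq⟩ := LTree.mem_nodes_isNode T _ htm
    have hrj : r' = j := by
      have := hspec.2
      rw [hteq] at this
      exact this
    rcases htop.2 with h0 | hleft
    · -- i0 = 0 : the first in-order node, which lies on the diagonal
      have hTne : T ≠ LTree.nil := by
        intro hn
        rw [hn] at htop
        exact absurd htop.1 (by simp [LTree.size])
      obtain ⟨q, hq1, hq2⟩ := LTree.exists_diag_first T hTne
      rw [← h0, hteq] at hq2
      refine ⟨q, (LTree.mem_positions_iff T q).mpr ⟨L', r', R', hq2⟩, ?_⟩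
      simpa [LTree.blabel, LTree.rootLabel, hrj] using
        LTree.blabelAux_diag q T _ hq1 hq2
    · -- the node has a nonempty left subtree
      rw [hteq] at hleft
      have hLne : L' ≠ LTree.nil := hleft
      obtain ⟨p, hp⟩ := LTree.exists_pos_of_mem_nodes T _ htm
      rw [hteq] at hp
      by_cases hdg : LTree.OnDiag p
      · refine ⟨p, (LTree.mem_positions_iff T p).mpr ⟨L', r', R', hp⟩, ?_⟩
        simpa [LTree.blabel, LTree.rootLabel, hrj] using
          LTree.blabelAux_diag p T _ hdg hp
      · refine ⟨p ++ [false], ?_, ?_⟩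
        · apply (LTree.mem_positions_iff T _).mpr
          have hsub : T.subtreeAt (p ++ [false]) = some L' := by
            rw [LTree.subtreeAt_append, hp]
            simp [LTree.subtreeAt]
          rcases hL' : L' with _ | ⟨a, b, c⟩
          · exact absurd hL' hLne
          · exact ⟨a, b, c, by rw [hsub, hL']⟩
        · have := LTree.blabelAux_snoc_false p T true T.rootLabel L' r' R' hp
            (by rintro ⟨_, hd⟩; exact hdg hd)
          simpa [LTree.blabel, hrj] using this
  refine ⟨?_, ?_, ?_⟩
  · -- nonempty
    intro B hB
    obtain ⟨i, hi, rfl⟩ := List.mem_map.mp hB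
    rw [List.mem_range] at hi
    obtain ⟨p, hp, hbp⟩ := hexists (i + 1) (by omega) (by omega)
    simp only [ne_eq, Multiset.coe_eq_zero]
    intro hemp
    have hmemf : p ∈ T.positions.filter (fun q => T.blabel q = i + 1) :=
      List.mem_filter.mpr ⟨hp, by simp [hbp]⟩
    have := List.mem_map_of_mem (f := T.labelAt) hmemf
    rw [hemp] at this
    simp at this
  · -- union
    intro j
    constructor
    · rintro ⟨h1, h2⟩
      rw [hlen] at h2
      have hj : j ∈ T.inorder := (hiff j).mpr ⟨h1, h2⟩
      have hmem : j ∈ T.nodes.map LTree.rootLabel := by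
        rw [LTree.nodes_map_rootLabel]; exact hj
      obtain ⟨t, ht, hrt⟩ := List.mem_map.mp hmem
      obtain ⟨L', r', R', rfl⟩ := LTree.mem_nodes_isNode T t ht
      obtain ⟨p, hp⟩ := LTree.exists_pos_of_mem_nodes T _ ht
      have hppos : p ∈ T.positions := (LTree.mem_positions_iff T p).mpr ⟨L', r', R', hp⟩
      have hrj : r' = j := hrt
      have hjb : j ≤ T.blabel p := hrj ▸ hlb p L' r' R' hp
      have hble : T.blabel p ≤ T.maxL := hub p
      refine ⟨_, List.mem_map.mpr ⟨T.blabel p - 1, List.mem_range.mpr (by omega), rfl⟩, ?_⟩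
      simp only [Multiset.mem_coe, List.mem_map]
      refine ⟨p, List.mem_filter.mpr ⟨hppos, by simp; omega⟩, ?_⟩
      simp [LTree.labelAt, hp, LTree.rootLabel, hrj]
    · rintro ⟨B, hB, hjB⟩
      obtain ⟨i, hi, rfl⟩ := List.mem_map.mp hB
      simp only [Multiset.mem_coe, List.mem_map] at hjB
      obtain ⟨p, hpf, hlab⟩ := hjB
      have hp := (List.mem_filter.mp hpf).1
      obtain ⟨L', r', R', hsub⟩ := hnode p hp
      have hr : T.labelAt p = r' := by simp [LTree.labelAt, hsub, LTree.rootLabel]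
      have hin : j ∈ T.inorder := by
        rw [← hlab, hr]
        exact LTree.mem_inorder_of_subtreeAt p T _ hsub r' (by simp [LTree.inorder])
      rw [hlen]
      exact (hiff j).mp hin
  · -- upper bound
    intro i hi j hj
    have hB : T.cover.get ⟨i, hi⟩ =
        (((T.positions.filter fun p => T.blabel p = i + 1).map T.labelAt : List ℕ) : Multiset ℕ) := by
      simp [LTree.cover]
    rw [hB] at hj
    simp only [Multiset.mem_coe, List.mem_map] at hj
    obtain ⟨p, hpf, hlab⟩ := hj
    obtain ⟨hp, hbl⟩ := List.mem_filter.mp hpf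
    obtain ⟨L', r', R', hsub⟩ := hnode p hp
    have hr : T.labelAt p = r' := by simp [LTree.labelAt, hsub, LTree.rootLabel]
    have hle := hlb p L' r' R' hsub
    have hbeq : T.blabel p = i + 1 := by simpa using hbl
    omega

/-- the Fishburn cover `P(T) = B_1 … B_k` of a Fishburn tree with
maximum label `k` is a Fishburn cover. -/
theorem fishburn_cover_isCover (T : LTree) (h : T.IsFishburnTree) :
    IsFishburnCover T.cover :=
  fishburn_cover_isCover' T h
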